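/- arXiv:math/0106004 — 4 statements merged into one kernel-verified Lean document; each statement's English description precedes it below -/
import Mathlib

section
/- Let A and B be self-adjoint continuous linear operators on H and let ψ be a unit vector; set a := ⟨A⟩_ψ and b := ⟨B⟩_ψ. Then (ΔA)²_ψ · (ΔB)²_ψ ≥ (Im⟨Aψ,Bψ⟩)² + (Re⟨Aψ,Bψ⟩ − a·b)². (This is the uncertainty relation of the geometrical formulation of quantum mechanics: (ΔA)(ΔB) ≥ ((ħ/2){A,B}_Ω)² + ((A,B)_G)², where {A,B}_Ω is the symplectic Poisson bracket and (A,B)_G the Riemannian bracket of the expectation functions.) -/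
/-!
Write `u' := u - ⟪ψ, u⟫ • ψ` for the component of `u` orthogonal to the unit vector `ψ`. Then
`⟪u', v'⟫ = ⟪u, v⟫ - conj ⟪ψ, u⟫ ⟪ψ, v⟫` and `‖u'‖² = ‖u‖² - ‖⟪ψ, u⟫‖²`, so Cauchy–Schwarz for
`u' = Aψ - aψ` and `v' = Bψ - bψ` is the inequality, once self-adjointness makes `⟪ψ, Aψ⟫ = a` and
`⟪ψ, Bψ⟫ = b` real.
-/

local notation "⟪" x ", " y "⟫_ℂ" => @inner ℂ _ _ x y

open RCLike ComplexConjugate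

section UnitVector

variable {𝕜 E : Type*} [RCLike 𝕜] [NormedAddCommGroup E] [InnerProductSpace 𝕜 E]
  {ψ : E} (hψ : ‖ψ‖ = 1)

local notation "⟪" x ", " y "⟫" => @inner 𝕜 _ _ x y

include hψ

theorem inner_sub_inner_smul_of_norm_eq_one (u v : E) :
    ⟪u - ⟪ψ, u⟫ • ψ, v - ⟪ψ, v⟫ • ψ⟫ = ⟪u, v⟫ - conj ⟪ψ, u⟫ * ⟪ψ, v⟫ := by
  have hψψ : ⟪ψ, ψ⟫ = 1 := by simp [inner_self_eq_norm_sq_to_K, hψ]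
  simp only [inner_sub_left, inner_sub_right, inner_smul_left, inner_smul_right, hψψ,
    inner_conj_symm]
  ring

theorem norm_sub_inner_smul_sq_of_norm_eq_one (u : E) :
    ‖u - ⟪ψ, u⟫ • ψ‖ ^ 2 = ‖u‖ ^ 2 - ‖⟪ψ, u⟫‖ ^ 2 := by
  have h := congrArg re (inner_sub_inner_smul_of_norm_eq_one (𝕜 := 𝕜) hψ u u)
  rwa [inner_self_eq_norm_sq, map_sub, inner_self_eq_norm_sq, RCLike.conj_mul, ← ofReal_pow,
    ofReal_re] at h

theorem norm_inner_sub_sq_le_of_norm_eq_one (u v : E) :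
    ‖⟪u, v⟫ - conj ⟪ψ, u⟫ * ⟪ψ, v⟫‖ ^ 2 ≤
      (‖u‖ ^ 2 - ‖⟪ψ, u⟫‖ ^ 2) * (‖v‖ ^ 2 - ‖⟪ψ, v⟫‖ ^ 2) := by
  rw [← inner_sub_inner_smul_of_norm_eq_one hψ,
    ← norm_sub_inner_smul_sq_of_norm_eq_one (𝕜 := 𝕜) hψ,
    ← norm_sub_inner_smul_sq_of_norm_eq_one (𝕜 := 𝕜) hψ, ← mul_pow]
  gcongr
  exact norm_inner_le_norm _ _

end UnitVector

/-- Uncertainty relation of the geometrical formulation of quantum mechanics: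
`(ΔA)²·(ΔB)² ≥ (Im⟨Aψ,Bψ⟩)² + (Re⟨Aψ,Bψ⟩ − ⟨A⟩⟨B⟩)²`. -/
theorem stmt_0 {H : Type*} [NormedAddCommGroup H] [InnerProductSpace ℂ H]
    (A B : H →L[ℂ] H)
    (hA : ∀ φ ψ : H, ⟪A φ, ψ⟫_ℂ = ⟪φ, A ψ⟫_ℂ)
    (hB : ∀ φ ψ : H, ⟪B φ, ψ⟫_ℂ = ⟪φ, B ψ⟫_ℂ)
    (ψ : H) (hψ : ‖ψ‖ = 1) :
    (‖A ψ‖ ^ 2 - (⟪ψ, A ψ⟫_ℂ.re) ^ 2) * (‖B ψ‖ ^ 2 - (⟪ψ, B ψ⟫_ℂ.re) ^ 2) ≥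
      (⟪A ψ, B ψ⟫_ℂ.im) ^ 2 +
        (⟪A ψ, B ψ⟫_ℂ.re - ⟪ψ, A ψ⟫_ℂ.re * ⟪ψ, B ψ⟫_ℂ.re) ^ 2 := by
  have ha : ⟪ψ, A ψ⟫_ℂ = (⟪ψ, A ψ⟫_ℂ.re : ℂ) :=
    (LinearMap.IsSymmetric.coe_re_inner_self_apply (T := (A : H →ₗ[ℂ] H)) hA ψ).symm
  have hb : ⟪ψ, B ψ⟫_ℂ = (⟪ψ, B ψ⟫_ℂ.re : ℂ) :=
    (LinearMap.IsSymmetric.coe_re_inner_self_apply (T := (B : H →ₗ[ℂ] H)) hB ψ).symm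
  have h := norm_inner_sub_sq_le_of_norm_eq_one (𝕜 := ℂ) hψ (A ψ) (B ψ)
  rw [ha, hb, Complex.conj_ofReal, ← Complex.ofReal_mul, Complex.sq_norm,
    Complex.normSq_apply] at h
  simpa [Complex.norm_real, sq, add_comm] using h
end

section
/- Let A be a self-adjoint continuous linear operator on H (⟨Aφ,ψ⟩ = ⟨φ,Aψ⟩ for all φ,ψ) and let f_A : H → ℝ be its expectation function f_A(x) := ½·Re⟨x, Ax⟩. Then f_A is Fréchet differentiable (over ℝ) and for all x, y ∈ H its derivative satisfies Df_A(x)(y) = Ω(−iAx, y). That is, the Schrödinger vector field x ↦ −iAx is exactly the Hamiltonian vector field of the expectation function f_A with respect to the symplectic pairing Ω. -/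
local notation "⟪" x ", " y "⟫_ℂ" => @inner ℂ _ _ x y

/-- The expectation function `f_A(x) = ½·Re⟨x,Ax⟫` of a self-adjoint operator `A` is
(real) Fréchet differentiable and `Df_A(x)(y) = Ω(−iAx, y) = Im⟨−iAx, y⟩`, i.e. the
Schrödinger vector field `x ↦ −iAx` is the Hamiltonian vector field of `f_A`. -/
theorem stmt_3 {H : Type*} [NormedAddCommGroup H] [InnerProductSpace ℂ H]
    (A : H →L[ℂ] H)
    (hA : ∀ φ ψ : H, ⟪A φ, ψ⟫_ℂ = ⟪φ, A ψ⟫_ℂ) (x : H) :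
    ∃ D : H →L[ℝ] ℝ,
      HasFDerivAt (fun z : H => (1 / 2 : ℝ) * (⟪z, A z⟫_ℂ).re) D x ∧
        ∀ y : H, D y = (⟪(-Complex.I) • (A x), y⟫_ℂ).im := by
  have h1 : HasFDerivAt (fun z : H => z) (ContinuousLinearMap.id ℝ H) x := hasFDerivAt_id x
  have h2 : HasFDerivAt (fun z : H => A z) (A.restrictScalars ℝ) x :=
    (A.restrictScalars ℝ).hasFDerivAt
  have hinner : HasFDerivAt (fun z : H => ⟪z, A z⟫_ℂ)
      ((fderivInnerCLM ℂ (x, A x)).comp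
        ((ContinuousLinearMap.id ℝ H).prod (A.restrictScalars ℝ))) x := h1.inner ℂ h2
  have hre : HasFDerivAt (fun z : H => (⟪z, A z⟫_ℂ).re)
      (Complex.reCLM.comp ((fderivInnerCLM ℂ (x, A x)).comp
        ((ContinuousLinearMap.id ℝ H).prod (A.restrictScalars ℝ)))) x :=
    (Complex.reCLM.hasFDerivAt).comp x hinner
  refine ⟨(1 / 2 : ℝ) • (Complex.reCLM.comp ((fderivInnerCLM ℂ (x, A x)).comp
        ((ContinuousLinearMap.id ℝ H).prod (A.restrictScalars ℝ)))), ?_, ?_⟩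
  · exact hre.const_mul (1 / 2 : ℝ)
  · intro y
    have key : ⟪x, A y⟫_ℂ = ⟪A x, y⟫_ℂ := (hA x y).symm
    have key2 : (⟪y, A x⟫_ℂ).re = (⟪A x, y⟫_ℂ).re := by
      rw [← inner_conj_symm (A x) y, Complex.conj_re]
    simp only [ContinuousLinearMap.smul_apply, ContinuousLinearMap.comp_apply,
      fderivInnerCLM_apply, ContinuousLinearMap.prod_apply, ContinuousLinearMap.id_apply,
      ContinuousLinearMap.coe_restrictScalars', Complex.reCLM_apply, smul_eq_mul,
      inner_smul_left, Complex.add_re, key, key2]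
    simp [Complex.ext_iff]
    ring
end

section
/- Let X : H → H be a continuous ℝ-linear map such that Re⟨Xu, v⟩ + Re⟨u, Xv⟩ = 0 and Im⟨Xu, v⟩ + Im⟨u, Xv⟩ = 0 for all u, v ∈ H (i.e. the linear flow generated by X infinitesimally preserves both the Riemannian pairing G and the symplectic pairing Ω). Then X is complex-linear, i.e. X(i·u) = i·X(u) for all u, and the operator A := i∘X is self-adjoint: ⟨Au, v⟩ = ⟨u, Av⟩ for all u, v. (This is the linear-generator form of the statement that a function on projective Hilbert space is induced by a self-adjoint operator if and only if its Hamiltonian vector field preserves the Riemannian metric G.) -/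
local notation "⟪" x ", " y "⟫_ℂ" => @inner ℂ _ _ x y

/-- A continuous real-linear vector field `X` on `H` infinitesimally preserving both the
Riemannian pairing `G = Re⟨·,·⟩` and the symplectic pairing `Ω = Im⟨·,·⟩` is
complex-linear and `A = i∘X` is self-adjoint. -/
theorem stmt_5 {H : Type*} [NormedAddCommGroup H] [InnerProductSpace ℂ H]
    (X : H →L[ℝ] H)
    (hG : ∀ u v : H, (⟪X u, v⟫_ℂ).re + (⟪u, X v⟫_ℂ).re = 0)
    (hΩ : ∀ u v : H, (⟪X u, v⟫_ℂ).im + (⟪u, X v⟫_ℂ).im = 0) :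
    (∀ u : H, X (Complex.I • u) = Complex.I • X u) ∧
      (∀ u v : H, ⟪Complex.I • X u, v⟫_ℂ = ⟪u, Complex.I • X v⟫_ℂ) := by
  have h : ∀ u v : H, ⟪X u, v⟫_ℂ = -⟪u, X v⟫_ℂ := by
    intro u v
    apply Complex.ext
    · have := hG u v; simp only [Complex.neg_re]; linarith
    · have := hΩ u v; simp only [Complex.neg_im]; linarith
  have hlin : ∀ u : H, X (Complex.I • u) = Complex.I • X u := by
    intro u
    have key : ∀ v : H, ⟪X (Complex.I • u) - Complex.I • X u, v⟫_ℂ = 0 := by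
      intro v
      rw [inner_sub_left, h (Complex.I • u) v, inner_smul_left, inner_smul_left,
        h u v]
      simp only [Complex.conj_I]; ring
    have h0 := key (X (Complex.I • u) - Complex.I • X u)
    rw [inner_self_eq_zero] at h0
    exact sub_eq_zero.mp h0
  refine ⟨hlin, fun u v => ?_⟩
  rw [inner_smul_left, inner_smul_right, h u v]
  simp only [Complex.conj_I]; ring
end

section
/- Let f, g : V → ℝ be twice continuously differentiable and let σ : V → ℂ be twice continuously differentiable. Then the Souriau–Kostant prequantum operators satisfy the correspondence principle: for every x ∈ V, (Q_f(Q_g σ))(x) − (Q_g(Q_f σ))(x) = (Q_{{f,g}} σ)(x), i.e. [Q_f, Q_g] = Q_{{f,g}}. -/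
local notation "⟪" x ", " y "⟫_ℝ" => @inner ℝ _ _ x y

/-- The Hamiltonian vector field `X_f = J∘∇f` of `f` w.r.t. `ω(u,v) = ⟨Ju,v⟩`. -/
noncomputable def hamVF {V : Type*} [NormedAddCommGroup V] [InnerProductSpace ℝ V]
    [CompleteSpace V] (J : V →ₗ[ℝ] V) (f : V → ℝ) : V → V := fun x =>
  J (gradient f x)

/-- The Souriau–Kostant prequantum operator
`(Q_f σ)(x) = dσ_x(X_f(x)) − πi·ω(x,X_f(x))·σ(x) + 2πi·f(x)·σ(x)`. -/
noncomputable def prequantOp {V : Type*} [NormedAddCommGroup V] [InnerProductSpace ℝ V]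
    [CompleteSpace V] (J : V →ₗ[ℝ] V) (f : V → ℝ) (σ : V → ℂ) : V → ℂ := fun x =>
  fderiv ℝ σ x (hamVF J f x) - Real.pi * Complex.I * ((⟪J x, hamVF J f x⟫_ℝ : ℝ) : ℂ) * σ x
    + 2 * Real.pi * Complex.I * (f x : ℂ) * σ x

/-!
Write `Q_f = ∇_{X_f} + 2πi f` with the flat connection `∇`. Then
`[Q_f, Q_g] = [∇_{X_f}, ∇_{X_g}] + 2πi (X_f g - X_g f)`. Since `∇` has curvature `-2πi ω`, the
first term is `∇_{[X_f, X_g]} - 2πi {f,g}`, while `X_f g = -X_g f = {f,g}`. Finally the symmetry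
of the Hessians of `f` and `g` gives `[X_f, X_g] = X_{{f,g}}`, so the sum is `Q_{{f,g}}`.
-/

open VectorField InnerProductSpace

section
variable {V : Type*} [NormedAddCommGroup V] [InnerProductSpace ℝ V]

theorem inner_map_swap_eq_neg {J : V →ₗ[ℝ] V} (hJiso : ∀ u v : V, ⟪J u, J v⟫_ℝ = ⟪u, v⟫_ℝ)
    (hJ2 : ∀ v : V, J (J v) = -v) (u v : V) : ⟪J u, v⟫_ℝ = -⟪J v, u⟫_ℝ := by
  rw [← hJiso, hJ2, inner_neg_left, real_inner_comm]

noncomputable def covDeriv (J : V →ₗ[ℝ] V) (X : V → V) (σ : V → ℂ) : V → ℂ := fun x =>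
  fderiv ℝ σ x (X x) - Real.pi * Complex.I * ((⟪J x, X x⟫_ℝ : ℝ) : ℂ) * σ x

theorem covDeriv_apply (J : V →ₗ[ℝ] V) (X : V → V) (σ : V → ℂ) (x : V) :
    covDeriv J X σ x =
      fderiv ℝ σ x (X x) - Real.pi * Complex.I * ((⟪J x, X x⟫_ℝ : ℝ) : ℂ) * σ x :=
  rfl

section Complete
variable [CompleteSpace V]

noncomputable def poissonBracket (J : V →ₗ[ℝ] V) (f g : V → ℝ) : V → ℝ := fun x =>
  ⟪J (hamVF J f x), hamVF J g x⟫_ℝ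

theorem prequantOp_apply (J : V →ₗ[ℝ] V) (f : V → ℝ) (σ : V → ℂ) (x : V) :
    prequantOp J f σ x = covDeriv J (hamVF J f) σ x + 2 * Real.pi * Complex.I * (f x : ℂ) * σ x :=
  rfl

theorem fderiv_apply_hamVF {J : V →ₗ[ℝ] V} (hJiso : ∀ u v : V, ⟪J u, J v⟫_ℝ = ⟪u, v⟫_ℝ)
    (f g : V → ℝ) (x : V) : fderiv ℝ g x (hamVF J f x) = poissonBracket J f g x := by
  rw [poissonBracket, hamVF, hamVF, hJiso, real_inner_comm, inner_gradient_left]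

theorem poissonBracket_swap {J : V →ₗ[ℝ] V} (hω : ∀ u v : V, ⟪J u, v⟫_ℝ = -⟪J v, u⟫_ℝ)
    (f g : V → ℝ) (x : V) : poissonBracket J g f x = -poissonBracket J f g x :=
  hω _ _

theorem inner_fderiv_gradient (f : V → ℝ) (x u v : V) :
    ⟪fderiv ℝ (gradient f) x u, v⟫_ℝ = fderiv ℝ (fderiv ℝ f) x u v := by
  rw [show gradient f = (toDual ℝ V).symm ∘ fderiv ℝ f from rfl,
    LinearIsometryEquiv.comp_fderiv]
  exact toDual_symm_apply

theorem ContDiffAt.inner_fderiv_gradient_comm {f : V → ℝ} {x : V} (hf : ContDiffAt ℝ 2 f x)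
    (u v : V) : ⟪fderiv ℝ (gradient f) x u, v⟫_ℝ = ⟪u, fderiv ℝ (gradient f) x v⟫_ℝ := by
  rw [inner_fderiv_gradient, real_inner_comm, inner_fderiv_gradient,
    hf.isSymmSndFDerivAt (by simp)]

theorem ContDiffAt.differentiableAt_gradient {f : V → ℝ} {x : V} (hf : ContDiffAt ℝ 2 f x) :
    DifferentiableAt ℝ (gradient f) x :=
  (toDual ℝ V).symm.differentiableAt.comp x
    ((hf.fderiv_right (m := 1) (by norm_num)).differentiableAt one_ne_zero)

end Complete

section FiniteDimensional
variable [FiniteDimensional ℝ V] {J : V →ₗ[ℝ] V}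

theorem fderiv_hamVF {f : V → ℝ} {x : V} (hf : DifferentiableAt ℝ (gradient f) x) :
    fderiv ℝ (hamVF J f) x = J.toContinuousLinearMap.comp (fderiv ℝ (gradient f) x) := by
  rw [← ContinuousLinearMap.fderiv (f := J.toContinuousLinearMap) (x := gradient f x)]
  exact fderiv_comp x J.toContinuousLinearMap.differentiableAt hf

theorem ContDiffAt.differentiableAt_hamVF {f : V → ℝ} {x : V} (hf : ContDiffAt ℝ 2 f x) :
    DifferentiableAt ℝ (hamVF J f) x :=
  J.toContinuousLinearMap.differentiableAt.comp x hf.differentiableAt_gradient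

theorem gradient_poissonBracket (hJiso : ∀ u v : V, ⟪J u, J v⟫_ℝ = ⟪u, v⟫_ℝ)
    (hJ2 : ∀ v : V, J (J v) = -v) {f g : V → ℝ} {x : V} (hf : ContDiffAt ℝ 2 f x)
    (hg : ContDiffAt ℝ 2 g x) :
    gradient (poissonBracket J f g) x =
      fderiv ℝ (gradient g) x (hamVF J f x) - fderiv ℝ (gradient f) x (hamVF J g x) := by
  have hP : poissonBracket J f g = fun y => ⟪hamVF J f y, gradient g y⟫_ℝ :=
    funext fun y => hJiso _ _
  refine ext_inner_right ℝ fun v => ?_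
  rw [inner_gradient_left, hP,
    fderiv_inner_apply ℝ hf.differentiableAt_hamVF hg.differentiableAt_gradient,
    fderiv_hamVF hf.differentiableAt_gradient, inner_sub_left, hg.inner_fderiv_gradient_comm,
    hf.inner_fderiv_gradient_comm]
  simp only [ContinuousLinearMap.coe_comp, Function.comp_apply,
    LinearMap.coe_toContinuousLinearMap', hamVF]
  rw [inner_map_swap_eq_neg hJiso hJ2 (fderiv ℝ (gradient f) x v), sub_eq_add_neg]

theorem hamVF_poissonBracket (hJiso : ∀ u v : V, ⟪J u, J v⟫_ℝ = ⟪u, v⟫_ℝ)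
    (hJ2 : ∀ v : V, J (J v) = -v) {f g : V → ℝ} {x : V} (hf : ContDiffAt ℝ 2 f x)
    (hg : ContDiffAt ℝ 2 g x) :
    hamVF J (poissonBracket J f g) x = lieBracket ℝ (hamVF J f) (hamVF J g) x := by
  rw [hamVF, gradient_poissonBracket hJiso hJ2 hf hg, lieBracket,
    fderiv_hamVF hf.differentiableAt_gradient, fderiv_hamVF hg.differentiableAt_gradient]
  simp only [map_sub, ContinuousLinearMap.comp_apply, LinearMap.coe_toContinuousLinearMap']

theorem differentiableAt_covDeriv {X : V → V} {σ : V → ℂ} {x : V}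
    (hX : DifferentiableAt ℝ X x) (hσ : ContDiffAt ℝ 2 σ x) :
    DifferentiableAt ℝ (covDeriv J X σ) x := by
  have hσ' := (hσ.fderiv_right (m := 1) (by norm_num)).differentiableAt one_ne_zero
  exact (hσ'.clm_apply hX).sub ((((Complex.ofRealCLM.differentiableAt.comp x
    (J.toContinuousLinearMap.differentiableAt.inner ℝ hX)).const_mul _).mul
    (hσ.differentiableAt two_ne_zero)))

theorem fderiv_covDeriv_apply {X : V → V} {σ : V → ℂ} {x : V}
    (hX : DifferentiableAt ℝ X x) (hσ : ContDiffAt ℝ 2 σ x) (v : V) :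
    fderiv ℝ (covDeriv J X σ) x v =
      fderiv ℝ (fderiv ℝ σ) x v (X x) + fderiv ℝ σ x (fderiv ℝ X x v)
        - Real.pi * Complex.I * ((⟪J v, X x⟫_ℝ + ⟪J x, fderiv ℝ X x v⟫_ℝ : ℝ) : ℂ) * σ x
        - Real.pi * Complex.I * ((⟪J x, X x⟫_ℝ : ℝ) : ℂ) * fderiv ℝ σ x v := by
  have hσ' := (hσ.fderiv_right (m := 1) (by norm_num)).differentiableAt one_ne_zero
  have H := (hσ'.hasFDerivAt.clm_apply hX.hasFDerivAt).sub
    (((Complex.ofRealCLM.hasFDerivAt.comp x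
      (J.toContinuousLinearMap.hasFDerivAt.inner ℝ hX.hasFDerivAt)).const_mul
      (Real.pi * Complex.I : ℂ)).mul (hσ.differentiableAt two_ne_zero).hasFDerivAt)
  rw [HasFDerivAt.fderiv (f := covDeriv J X σ) H]
  simp only [LinearMap.coe_toContinuousLinearMap', Function.comp_apply, Complex.ofRealCLM_apply,
    sub_apply, add_apply, ContinuousLinearMap.comp_apply,
    ContinuousLinearMap.flip_apply, smul_apply, smul_eq_mul,
    ContinuousLinearMap.prod_apply, fderivInnerCLM_apply, Complex.ofReal_add]
  ring

theorem covDeriv_commutator (hω : ∀ u v : V, ⟪J u, v⟫_ℝ = -⟪J v, u⟫_ℝ) {X Y : V → V}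
    {σ : V → ℂ} {x : V} (hX : DifferentiableAt ℝ X x) (hY : DifferentiableAt ℝ Y x)
    (hσ : ContDiffAt ℝ 2 σ x) :
    covDeriv J X (covDeriv J Y σ) x - covDeriv J Y (covDeriv J X σ) x =
      covDeriv J (lieBracket ℝ X Y) σ x
        - 2 * Real.pi * Complex.I * ((⟪J (X x), Y x⟫_ℝ : ℝ) : ℂ) * σ x := by
  rw [covDeriv_apply J X, covDeriv_apply J Y (covDeriv J X σ), fderiv_covDeriv_apply hY hσ,
    fderiv_covDeriv_apply hX hσ, covDeriv_apply J X, covDeriv_apply J Y, covDeriv_apply,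
    lieBracket, map_sub, inner_sub_right, hσ.isSymmSndFDerivAt (by simp) (Y x), hω (Y x)]
  push_cast
  ring

theorem fderiv_prequantOp_apply {f : V → ℝ} {σ : V → ℂ} {x : V} (hf : ContDiffAt ℝ 2 f x)
    (hσ : ContDiffAt ℝ 2 σ x) (v : V) :
    fderiv ℝ (prequantOp J f σ) x v =
      fderiv ℝ (covDeriv J (hamVF J f) σ) x v
        + 2 * Real.pi * Complex.I * ((fderiv ℝ f x v : ℂ) * σ x + f x * fderiv ℝ σ x v) := by
  have hcov := differentiableAt_covDeriv (J := J) (hf.differentiableAt_hamVF (J := J)) hσ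
  have H := hcov.hasFDerivAt.add
    (((Complex.ofRealCLM.hasFDerivAt.comp x (hf.differentiableAt two_ne_zero).hasFDerivAt).const_mul
      (2 * Real.pi * Complex.I : ℂ)).mul (hσ.differentiableAt two_ne_zero).hasFDerivAt)
  rw [HasFDerivAt.fderiv (f := prequantOp J f σ) H]
  simp only [Function.comp_apply, Complex.ofRealCLM_apply, add_apply,
    smul_apply, smul_eq_mul, ContinuousLinearMap.comp_apply, add_right_inj]
  ring

theorem prequantOp_prequantOp_apply {f g : V → ℝ} {σ : V → ℂ} {x : V}
    (hg : ContDiffAt ℝ 2 g x) (hσ : ContDiffAt ℝ 2 σ x) :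
    prequantOp J f (prequantOp J g σ) x =
      covDeriv J (hamVF J f) (covDeriv J (hamVF J g) σ) x
        + 2 * Real.pi * Complex.I * ((fderiv ℝ g x (hamVF J f x) : ℂ) * σ x
          + g x * covDeriv J (hamVF J f) σ x + f x * covDeriv J (hamVF J g) σ x)
        + (2 * Real.pi * Complex.I) ^ 2 * f x * g x * σ x := by
  rw [prequantOp_apply, covDeriv_apply J (hamVF J f) (prequantOp J g σ),
    fderiv_prequantOp_apply hg hσ, prequantOp_apply, covDeriv_apply J (hamVF J f) σ,
    covDeriv_apply J (hamVF J f) (covDeriv J (hamVF J g) σ)]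
  ring

end FiniteDimensional
end

/-- The correspondence principle for the Souriau–Kostant prequantum operators:
`[Q_f, Q_g] = Q_{{f,g}}`, where `{f,g} = ω(X_f, X_g)`. -/
theorem stmt_9 {V : Type*} [NormedAddCommGroup V] [InnerProductSpace ℝ V]
    [FiniteDimensional ℝ V]
    (J : V →ₗ[ℝ] V) (hJiso : ∀ u v : V, ⟪J u, J v⟫_ℝ = ⟪u, v⟫_ℝ)
    (hJ2 : ∀ v : V, J (J v) = -v)
    (f g : V → ℝ) (hf : ContDiff ℝ 2 f) (hg : ContDiff ℝ 2 g)
    (σ : V → ℂ) (hσ : ContDiff ℝ 2 σ) (x : V) :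
    prequantOp J f (prequantOp J g σ) x - prequantOp J g (prequantOp J f σ) x =
      prequantOp J (fun y => ⟪J (hamVF J f y), hamVF J g y⟫_ℝ) σ x := by
  have hω := inner_map_swap_eq_neg hJiso hJ2
  have hbracket : lieBracket ℝ (hamVF J f) (hamVF J g) = hamVF J (poissonBracket J f g) :=
    funext fun y => (hamVF_poissonBracket hJiso hJ2 hf.contDiffAt hg.contDiffAt).symm
  have hcomm : covDeriv J (hamVF J f) (covDeriv J (hamVF J g) σ) x
      - covDeriv J (hamVF J g) (covDeriv J (hamVF J f) σ) x =
      covDeriv J (hamVF J (poissonBracket J f g)) σ x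
        - 2 * Real.pi * Complex.I * (poissonBracket J f g x : ℂ) * σ x := by
    rw [← hbracket]
    exact covDeriv_commutator hω hf.contDiffAt.differentiableAt_hamVF
      hg.contDiffAt.differentiableAt_hamVF hσ.contDiffAt
  change _ = prequantOp J (poissonBracket J f g) σ x
  rw [prequantOp_prequantOp_apply hg.contDiffAt hσ.contDiffAt,
    prequantOp_prequantOp_apply hf.contDiffAt hσ.contDiffAt, prequantOp_apply,
    fderiv_apply_hamVF hJiso, fderiv_apply_hamVF hJiso, poissonBracket_swap hω f g,
    Complex.ofReal_neg]
  linear_combination hcomm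
end
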